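/- Let p be an odd prime and n ≥ 1. The map (u₀, u) ↦ ((u u₀)^{1/2}, φ((u/u₀)^{1/2})) is a bijection from U_n × U_n onto U_n × p^n ℤ_p which preserves the product Haar measure, where v^{1/2} denotes the unique square root in U_n and φ(v) = v - v⁻¹. -/

import Mathlib

open MeasureTheory
open scoped Classical

/-- The square root in the higher principal unit group `U_n = 1 + p^n ℤ_p`
(unique for odd `p`), defined by choice. -/
noncomputable def padicSqrt (p : ℕ) [Fact p.Prime] (n : ℕ) (v : ℚ_[p]) : ℚ_[p] :=
  if h : ∃ w : ℚ_[p], ‖w - 1‖ ≤ (p : ℝ) ^ (-(n : ℤ)) ∧ w ^ 2 = v then h.choose else 0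

/-!
For odd `p` we have `‖u + v‖ = ‖2‖ = 1` for principal units `u, v`, so squaring, the map
`(u₀, u) ↦ (u u₀, u / u₀)` and `φ(v) = v - v⁻¹` are isometries of principal units; Hensel's lemma
makes squaring onto `U_n`, and `φ(w) = x` is solved by `w = x/2 + √(1 + x²/4)`. Hence the map is an
isometric bijection of the ball `U_n × U_n` onto the ball `U_n × p^n ℤ_p` of the same radius.
In an ultrametric space two closed balls are nested or disjoint, so the closed balls form a
π-system generating the Borel sets, and an isometric bijection between balls of equal radius maps
the balls inside one onto the balls inside the other. A Haar measure gives all balls of a given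
radius the same mass, hence it is preserved.
-/

open Metric Set

instance Prod.instIsUltrametricDist {X Y : Type*} [PseudoMetricSpace X] [PseudoMetricSpace Y]
    [IsUltrametricDist X] [IsUltrametricDist Y] : IsUltrametricDist (X × Y) :=
  ⟨fun x y z => by
    simp only [Prod.dist_eq]
    exact max_le
      ((dist_triangle_max _ _ _).trans (max_le_max (le_max_left _ _) (le_max_left _ _)))
      ((dist_triangle_max _ _ _).trans (max_le_max (le_max_right _ _) (le_max_right _ _)))⟩

namespace IsUltrametricDist

variable {X : Type*} [PseudoMetricSpace X] [IsUltrametricDist X]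

lemma closedBall_inter_closedBall_of_mem {x y z : X} {r s : ℝ} (hx : z ∈ closedBall x r)
    (hy : z ∈ closedBall y s) : closedBall x r ∩ closedBall y s = closedBall z (min r s) := by
  rw [closedBall_eq_of_mem hx, closedBall_eq_of_mem hy]
  ext
  simp only [mem_inter_iff, mem_closedBall, le_min_iff]

lemma isPiSystem_closedBall : IsPiSystem {B : Set X | ∃ x r, 0 < r ∧ B = closedBall x r} := by
  rintro _ ⟨x, r, hr, rfl⟩ _ ⟨y, s, hs, rfl⟩ ⟨z, hzx, hzy⟩
  exact ⟨z, min r s, lt_min hr hs, closedBall_inter_closedBall_of_mem hzx hzy⟩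

lemma isTopologicalBasis_closedBall :
    TopologicalSpace.IsTopologicalBasis {B : Set X | ∃ x r, 0 < r ∧ B = closedBall x r} := by
  refine TopologicalSpace.isTopologicalBasis_of_isOpen_of_nhds ?_ fun x U hx hU => ?_
  · rintro _ ⟨x, r, hr, rfl⟩
    exact isOpen_closedBall x hr.ne'
  · obtain ⟨ε, hε, hball⟩ := Metric.isOpen_iff.1 hU x hx
    exact ⟨closedBall x (ε / 2), ⟨x, ε / 2, half_pos hε, rfl⟩, mem_closedBall_self (half_pos hε).le,
      (closedBall_subset_ball (half_lt_self hε)).trans hball⟩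

lemma borel_eq_generateFrom_closedBall [SecondCountableTopology X] :
    borel X = MeasurableSpace.generateFrom {B : Set X | ∃ x r, 0 < r ∧ B = closedBall x r} :=
  isTopologicalBasis_closedBall.borel_eq_generateFrom

theorem measurePreserving_restrict_closedBall [MeasurableSpace X] [BorelSpace X] [ProperSpace X]
    {ν : Measure X} [IsFiniteMeasureOnCompacts ν]
    (hν : ∀ (x y : X) (r : ℝ), ν (closedBall x r) = ν (closedBall y r))
    {f : X → X} (hf : Measurable f) {a b : X} {r : ℝ}
    (hmaps : MapsTo f (closedBall a r) (closedBall b r))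
    (hsurj : SurjOn f (closedBall a r) (closedBall b r))
    (hdist : ∀ x ∈ closedBall a r, ∀ y ∈ closedBall a r, dist (f x) (f y) = dist x y) :
    MeasurePreserving f (ν.restrict (closedBall a r)) (ν.restrict (closedBall b r)) := by
  have : IsFiniteMeasure (ν.restrict (closedBall a r)) :=
    isFiniteMeasure_restrict.2 measure_closedBall_lt_top.ne
  refine ⟨hf, ext_of_generate_finite _ (BorelSpace.measurable_eq.trans
    borel_eq_generateFrom_closedBall) isPiSystem_closedBall ?_ ?_⟩
  · rintro _ ⟨c, t, -, rfl⟩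
    rw [Measure.map_apply hf measurableSet_closedBall,
      Measure.restrict_apply (hf measurableSet_closedBall),
      Measure.restrict_apply measurableSet_closedBall]
    rcases (closedBall c t ∩ closedBall b r).eq_empty_or_nonempty with h | ⟨_, hc, hb⟩
    · suffices f ⁻¹' closedBall c t ∩ closedBall a r = ∅ by rw [this, h]
      exact eq_empty_of_forall_notMem fun x hx => h.subset ⟨hx.1, hmaps hx.2⟩
    obtain ⟨x, hx, rfl⟩ := hsurj hb
    have hpre : f ⁻¹' closedBall c t ∩ closedBall a r = closedBall x t ∩ closedBall a r := by
      ext y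
      simp only [mem_inter_iff, mem_preimage, closedBall_eq_of_mem hc, mem_closedBall]
      exact ⟨fun h => ⟨hdist y h.2 x hx ▸ h.1, h.2⟩, fun h => ⟨(hdist y h.2 x hx).symm ▸ h.1, h.2⟩⟩
    rw [hpre, closedBall_inter_closedBall_of_mem (mem_closedBall_self (dist_nonneg.trans hc)) hx,
      closedBall_inter_closedBall_of_mem hc hb, hν]
  · rw [Measure.map_apply hf MeasurableSet.univ, preimage_univ, Measure.restrict_apply_univ,
      Measure.restrict_apply_univ, hν]

end IsUltrametricDist

section PrincipalUnits

variable {K : Type*} [NormedField K] {u v u₀ v₀ : K}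

lemma norm_inv_sub_one (hu : ‖u‖ = 1) : ‖u⁻¹ - 1‖ = ‖u - 1‖ := by
  have hu0 : u ≠ 0 := norm_ne_zero_iff.1 (by simp [hu])
  rw [show u⁻¹ - 1 = (1 - u) * u⁻¹ by field_simp, norm_mul, norm_inv, hu, inv_one, mul_one,
    norm_sub_rev]

lemma ne_zero_of_norm_sub_one_lt_one (hu : ‖u - 1‖ < 1) : u ≠ 0 := by
  rintro rfl
  simp at hu

variable [IsUltrametricDist K]

lemma norm_eq_one_of_norm_sub_one_lt_one (hu : ‖u - 1‖ < 1) : ‖u‖ = 1 := by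
  have h := IsUltrametricDist.norm_add_eq_max_of_norm_ne_norm (x := u - 1) (y := (1 : K))
    (by rw [norm_one]; exact hu.ne)
  rwa [sub_add_cancel, norm_one, max_eq_right hu.le] at h

lemma norm_mul_sub_mul_le_max (hu : ‖u‖ ≤ 1) (hv₀ : ‖v₀‖ ≤ 1) :
    ‖u * u₀ - v * v₀‖ ≤ max ‖u - v‖ ‖u₀ - v₀‖ := by
  rw [show u * u₀ - v * v₀ = u * (u₀ - v₀) + (u - v) * v₀ by ring]
  refine (IsUltrametricDist.norm_add_le_max _ _).trans (max_le ?_ ?_)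
  · rw [norm_mul]
    exact (mul_le_of_le_one_left (norm_nonneg _) hu).trans (le_max_right _ _)
  · rw [norm_mul]
    exact (mul_le_of_le_one_right (norm_nonneg _) hv₀).trans (le_max_left _ _)

lemma mul_mem_closedBall_one {r : ℝ} (hr : r < 1) (hu : u ∈ closedBall 1 r)
    (hv : v ∈ closedBall 1 r) : u * v ∈ closedBall 1 r := by
  rw [mem_closedBall_iff_norm] at *
  have hu1 := norm_eq_one_of_norm_sub_one_lt_one (hu.trans_lt hr)
  simpa using (norm_mul_sub_mul_le_max (u₀ := v) (v := 1) hu1.le norm_one.le).trans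
    (max_le hu hv)

lemma inv_mem_closedBall_one {r : ℝ} (hr : r < 1) (hu : u ∈ closedBall 1 r) :
    u⁻¹ ∈ closedBall 1 r := by
  rw [mem_closedBall_iff_norm] at *
  rwa [norm_inv_sub_one (norm_eq_one_of_norm_sub_one_lt_one (hu.trans_lt hr))]

variable (h2 : ‖(2 : K)‖ = 1)
include h2

lemma norm_add_eq_one_of_norm_sub_one_lt_one (hu : ‖u - 1‖ < 1) (hv : ‖v - 1‖ < 1) :
    ‖u + v‖ = 1 := by
  have hlt : ‖(u - 1) + (v - 1)‖ < ‖(2 : K)‖ :=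
    h2 ▸ (IsUltrametricDist.norm_add_le_max _ _).trans_lt (max_lt hu hv)
  rw [show u + v = (u - 1) + (v - 1) + 2 by ring,
    IsUltrametricDist.norm_add_eq_max_of_norm_ne_norm hlt.ne, max_eq_right hlt.le, h2]

lemma norm_sq_sub_sq_of_norm_sub_one_lt_one (hu : ‖u - 1‖ < 1) (hv : ‖v - 1‖ < 1) :
    ‖u ^ 2 - v ^ 2‖ = ‖u - v‖ := by
  rw [sq_sub_sq, norm_mul, norm_add_eq_one_of_norm_sub_one_lt_one h2 hu hv, one_mul]

lemma norm_sub_inv_sub_sub_inv (hu : ‖u - 1‖ < 1) (hv : ‖v - 1‖ < 1) :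
    ‖(u - u⁻¹) - (v - v⁻¹)‖ = ‖u - v‖ := by
  have hu1 := norm_eq_one_of_norm_sub_one_lt_one hu
  have hv1 := norm_eq_one_of_norm_sub_one_lt_one hv
  have hu0 := ne_zero_of_norm_sub_one_lt_one hu
  have hv0 := ne_zero_of_norm_sub_one_lt_one hv
  have huv : ‖(u * v)⁻¹ - 1‖ < 1 := by
    rw [norm_inv_sub_one (by rw [norm_mul, hu1, hv1, one_mul])]
    simpa using (norm_mul_sub_mul_le_max (u₀ := v) (v := 1) hu1.le norm_one.le).trans_lt
      (max_lt hu hv)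
  rw [show (u - u⁻¹) - (v - v⁻¹) = (u - v) * (1 + (u * v)⁻¹) by field_simp; ring, norm_mul,
    norm_add_eq_one_of_norm_sub_one_lt_one h2 (by simp) huv, mul_one]

lemma norm_sub_inv (hu : ‖u - 1‖ < 1) : ‖u - u⁻¹‖ = ‖u - 1‖ := by
  simpa using norm_sub_inv_sub_sub_inv h2 hu (v := 1) (by simp)

lemma max_norm_mul_sub_mul_inv_eq (hu₀ : ‖u₀ - 1‖ < 1) (hu : ‖u - 1‖ < 1) (hv₀ : ‖v₀ - 1‖ < 1)
    (hv : ‖v - 1‖ < 1) :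
    max ‖u * u₀ - v * v₀‖ ‖u * u₀⁻¹ - v * v₀⁻¹‖ = max ‖u₀ - v₀‖ ‖u - v‖ := by
  have hu₀1 := norm_eq_one_of_norm_sub_one_lt_one hu₀
  have hv₀1 := norm_eq_one_of_norm_sub_one_lt_one hv₀
  have hu1 := norm_eq_one_of_norm_sub_one_lt_one hu
  have hv1 := norm_eq_one_of_norm_sub_one_lt_one hv
  have hu₀0 := ne_zero_of_norm_sub_one_lt_one hu₀
  have hv₀0 := ne_zero_of_norm_sub_one_lt_one hv₀
  have hdiv : ‖u * u₀⁻¹ - v * v₀⁻¹‖ = ‖u * v₀ - v * u₀‖ := by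
    rw [show u * u₀⁻¹ - v * v₀⁻¹ = (u * v₀ - v * u₀) * (u₀ * v₀)⁻¹ by field_simp, norm_mul,
      norm_inv, norm_mul, hu₀1, hv₀1, mul_one, inv_one, mul_one]
  rw [hdiv]
  apply le_antisymm
  · refine max_le ?_ ?_
    · exact (norm_mul_sub_mul_le_max hu1.le hv₀1.le).trans_eq (max_comm _ _)
    · exact (norm_mul_sub_mul_le_max hu1.le hu₀1.le).trans_eq
        (by rw [norm_sub_rev v₀, max_comm])
  · have hsum : ‖u + v‖ = 1 := norm_add_eq_one_of_norm_sub_one_lt_one h2 hu hv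
    have hsum₀ : ‖u₀ + v₀‖ = 1 := norm_add_eq_one_of_norm_sub_one_lt_one h2 hu₀ hv₀
    refine max_le ?_ ?_
    · calc ‖u₀ - v₀‖ = ‖(u * u₀ - v * v₀) + -(u * v₀ - v * u₀)‖ := by
            rw [show (u * u₀ - v * v₀) + -(u * v₀ - v * u₀) = (u + v) * (u₀ - v₀) by ring,
              norm_mul, hsum, one_mul]
        _ ≤ _ := (IsUltrametricDist.norm_add_le_max _ _).trans_eq (by rw [norm_neg])
    · calc ‖u - v‖ = ‖(u * u₀ - v * v₀) + (u * v₀ - v * u₀)‖ := by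
            rw [show (u * u₀ - v * v₀) + (u * v₀ - v * u₀) = (u₀ + v₀) * (u - v) by ring,
              norm_mul, hsum₀, one_mul]
        _ ≤ _ := IsUltrametricDist.norm_add_le_max _ _

end PrincipalUnits

namespace Padic

variable {p : ℕ} [Fact p.Prime]

lemma norm_two (hp : p ≠ 2) : ‖(2 : ℚ_[p])‖ = 1 := by
  simpa using (norm_natCast_eq_one_iff (p := p) (n := 2)).2
    ((Nat.coprime_primes Fact.out Nat.prime_two).2 hp)

open Polynomial in
lemma exists_sq_eq_of_norm_sub_one_lt_one (hp : p ≠ 2) {v : ℚ_[p]} (hv : ‖v - 1‖ < 1) :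
    ∃ w : ℚ_[p], ‖w - 1‖ < 1 ∧ w ^ 2 = v := by
  have hv1 : ‖v‖ ≤ 1 := ((norm_eq_of_norm_sub_lt_right (by simpa using hv)).trans norm_one).le
  set v' : ℤ_[p] := ⟨v, hv1⟩
  set F : ℤ_[p][X] := X ^ 2 - C v'
  have hF' : ‖aeval (1 : ℤ_[p]) (derivative F)‖ = 1 := by
    have : aeval (1 : ℤ_[p]) (derivative F) = 2 := by simp [F]; norm_num
    rw [this, PadicInt.norm_def]
    exact_mod_cast norm_two hp
  have hF : ‖aeval (1 : ℤ_[p]) F‖ < ‖aeval (1 : ℤ_[p]) (derivative F)‖ ^ 2 := by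
    have : aeval (1 : ℤ_[p]) F = 1 - v' := by simp [F]
    rw [hF', one_pow, this, norm_sub_rev (1 : ℤ_[p]), PadicInt.norm_def]
    exact_mod_cast hv
  obtain ⟨z, hz, hz1, -⟩ := hensels_lemma hF
  rw [hF', PadicInt.norm_def] at hz1
  have hz2 : z ^ 2 = v' := by simpa [F, sub_eq_zero] using hz
  exact ⟨z, by exact_mod_cast hz1, by exact_mod_cast congrArg ((↑) : ℤ_[p] → ℚ_[p]) hz2⟩

end Padic

section PadicSqrt

variable {p : ℕ} [Fact p.Prime] {n : ℕ}

local notation "ρ" => (p : ℝ) ^ (-(n : ℤ))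

lemma zpow_neg_natCast_lt_one (hn : 1 ≤ n) : ρ < 1 :=
  zpow_lt_one_of_neg₀ (mod_cast (Fact.out : p.Prime).one_lt) (by omega)

lemma norm_sub_one_lt_one_of_mem_closedBall (hn : 1 ≤ n) {v : ℚ_[p]}
    (hv : v ∈ closedBall 1 ρ) : ‖v - 1‖ < 1 :=
  (mem_closedBall_iff_norm.1 hv).trans_lt (zpow_neg_natCast_lt_one hn)

lemma padicSqrt_of_notMem (hn : 1 ≤ n) {v : ℚ_[p]} (hv : v ∉ closedBall 1 ρ) :
    padicSqrt p n v = 0 := by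
  rw [padicSqrt, dif_neg]
  rintro ⟨w, hw, rfl⟩
  exact hv (pow_two w ▸ mul_mem_closedBall_one (zpow_neg_natCast_lt_one hn) hw hw)

variable (hp : p ≠ 2) (hn : 1 ≤ n)
include hp hn

lemma padicSqrt_spec {v : ℚ_[p]} (hv : v ∈ closedBall 1 ρ) :
    padicSqrt p n v ∈ closedBall 1 ρ ∧ padicSqrt p n v ^ 2 = v := by
  have hex : ∃ w : ℚ_[p], ‖w - 1‖ ≤ ρ ∧ w ^ 2 = v := by
    obtain ⟨w, hw, rfl⟩ := Padic.exists_sq_eq_of_norm_sub_one_lt_one hp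
      (norm_sub_one_lt_one_of_mem_closedBall hn hv)
    refine ⟨w, ?_, rfl⟩
    rw [mem_closedBall_iff_norm, ← one_pow 2,
      norm_sq_sub_sq_of_norm_sub_one_lt_one (Padic.norm_two hp) hw (by simp)] at hv
    exact hv
  rw [padicSqrt, dif_pos hex]
  exact hex.choose_spec

lemma norm_padicSqrt_sub_padicSqrt {u v : ℚ_[p]} (hu : u ∈ closedBall 1 ρ)
    (hv : v ∈ closedBall 1 ρ) : ‖padicSqrt p n u - padicSqrt p n v‖ = ‖u - v‖ := by
  obtain ⟨hu', hu2⟩ := padicSqrt_spec hp hn hu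
  obtain ⟨hv', hv2⟩ := padicSqrt_spec hp hn hv
  rw [← norm_sq_sub_sq_of_norm_sub_one_lt_one (Padic.norm_two hp)
    (norm_sub_one_lt_one_of_mem_closedBall hn hu') (norm_sub_one_lt_one_of_mem_closedBall hn hv'),
    hu2, hv2]

lemma padicSqrt_sq {w : ℚ_[p]} (hw : w ∈ closedBall 1 ρ) : padicSqrt p n (w ^ 2) = w := by
  have hw2 : w ^ 2 ∈ closedBall 1 ρ :=
    pow_two w ▸ mul_mem_closedBall_one (zpow_neg_natCast_lt_one hn) hw hw
  obtain ⟨hs, hs2⟩ := padicSqrt_spec hp hn hw2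
  rw [← sub_eq_zero, ← norm_eq_zero, ← norm_sq_sub_sq_of_norm_sub_one_lt_one (Padic.norm_two hp)
    (norm_sub_one_lt_one_of_mem_closedBall hn hs) (norm_sub_one_lt_one_of_mem_closedBall hn hw),
    hs2, sub_self, norm_zero]

lemma measurable_padicSqrt [MeasurableSpace ℚ_[p]] [BorelSpace ℚ_[p]] :
    Measurable (padicSqrt p n) := by
  refine measurable_of_restrict_of_restrict_compl (measurableSet_closedBall (x := 1) (ε := ρ)) ?_ ?_
  · refine (Isometry.of_dist_eq fun u v => ?_).continuous.measurable
    simp only [domRestrict_apply, Subtype.dist_eq, dist_eq_norm]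
    exact norm_padicSqrt_sub_padicSqrt hp hn u.2 v.2
  · have : (closedBall (1 : ℚ_[p]) ρ)ᶜ.domRestrict (padicSqrt p n) = fun _ => 0 :=
      funext fun v => padicSqrt_of_notMem hn v.2
    exact this ▸ measurable_const

lemma exists_sub_inv_eq {x : ℚ_[p]} (hx : x ∈ closedBall 0 ρ) :
    ∃ w ∈ closedBall 1 ρ, w - w⁻¹ = x := by
  set y := x / 2
  have hy : ‖y‖ ≤ ρ := by rwa [norm_div, Padic.norm_two hp, div_one, ← mem_closedBall_zero_iff]
  have hv : 1 + y ^ 2 ∈ closedBall 1 ρ := by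
    rw [mem_closedBall_iff_norm, add_sub_cancel_left, norm_pow]
    exact (pow_le_of_le_one (norm_nonneg _) (hy.trans (zpow_neg_natCast_lt_one hn).le)
      two_ne_zero).trans hy
  obtain ⟨hs, hs2⟩ := padicSqrt_spec hp hn hv
  set s := padicSqrt p n (1 + y ^ 2)
  have hinv : (s + y)⁻¹ = s - y := inv_eq_of_mul_eq_one_right (by linear_combination hs2)
  refine ⟨s + y, ?_, by rw [hinv, add_sub_sub_cancel, add_halves]⟩
  rw [mem_closedBall_iff_norm, add_sub_right_comm]
  exact (IsUltrametricDist.norm_add_le_max _ _).trans (max_le (mem_closedBall_iff_norm.1 hs) hy)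

end PadicSqrt

section KernelChange

variable {p : ℕ} [Fact p.Prime] {n : ℕ}

local notation "ρ" => (p : ℝ) ^ (-(n : ℤ))

noncomputable def padicKernelChange (p : ℕ) [Fact p.Prime] (n : ℕ) (x : ℚ_[p] × ℚ_[p]) :
    ℚ_[p] × ℚ_[p] :=
  (padicSqrt p n (x.2 * x.1), padicSqrt p n (x.2 * x.1⁻¹) - (padicSqrt p n (x.2 * x.1⁻¹))⁻¹)

variable (hp : p ≠ 2) (hn : 1 ≤ n)
include hp hn

lemma mapsTo_padicKernelChange :
    MapsTo (padicKernelChange p n) (closedBall 1 ρ ×ˢ closedBall 1 ρ)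
      (closedBall 1 ρ ×ˢ closedBall 0 ρ) := by
  rintro ⟨u₀, u⟩ ⟨hu₀, hu⟩
  have hρ := zpow_neg_natCast_lt_one (p := p) hn
  have hs := (padicSqrt_spec hp hn (mul_mem_closedBall_one hρ hu hu₀)).1
  have ht := (padicSqrt_spec hp hn (mul_mem_closedBall_one hρ hu (inv_mem_closedBall_one hρ hu₀))).1
  refine ⟨hs, mem_closedBall_zero_iff.2 ?_⟩
  dsimp only [padicKernelChange]
  rw [norm_sub_inv (Padic.norm_two hp) (norm_sub_one_lt_one_of_mem_closedBall hn ht)]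
  exact ht

lemma surjOn_padicKernelChange :
    SurjOn (padicKernelChange p n) (closedBall 1 ρ ×ˢ closedBall 1 ρ)
      (closedBall 1 ρ ×ˢ closedBall 0 ρ) := by
  rintro ⟨a, x⟩ ⟨ha, hx⟩
  obtain ⟨w, hw, rfl⟩ := exists_sub_inv_eq hp hn hx
  have hρ := zpow_neg_natCast_lt_one (p := p) hn
  have ha0 := ne_zero_of_norm_sub_one_lt_one (norm_sub_one_lt_one_of_mem_closedBall hn ha)
  have hw0 := ne_zero_of_norm_sub_one_lt_one (norm_sub_one_lt_one_of_mem_closedBall hn hw)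
  refine ⟨(a * w⁻¹, a * w), ⟨mul_mem_closedBall_one hρ ha (inv_mem_closedBall_one hρ hw),
    mul_mem_closedBall_one hρ ha hw⟩, ?_⟩
  have hsq : a * w * (a * w⁻¹) = a ^ 2 := by field_simp
  have hquot : a * w * (a * w⁻¹)⁻¹ = w ^ 2 := by field_simp
  simp only [padicKernelChange, hsq, hquot, padicSqrt_sq hp hn ha, padicSqrt_sq hp hn hw]

lemma dist_padicKernelChange :
    ∀ x ∈ closedBall 1 ρ ×ˢ closedBall 1 ρ, ∀ y ∈ closedBall 1 ρ ×ˢ closedBall 1 ρ,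
      dist (padicKernelChange p n x) (padicKernelChange p n y) = dist x y := by
  rintro ⟨u₀, u⟩ ⟨hu₀, hu⟩ ⟨v₀, v⟩ ⟨hv₀, hv⟩
  have hρ := zpow_neg_natCast_lt_one (p := p) hn
  have h2 := Padic.norm_two hp
  have hlt {w : ℚ_[p]} (hw : w ∈ closedBall 1 ρ) : ‖w - 1‖ < 1 :=
    norm_sub_one_lt_one_of_mem_closedBall hn hw
  have hu' := inv_mem_closedBall_one hρ hu₀
  have hv' := inv_mem_closedBall_one hρ hv₀
  rw [Prod.dist_eq, Prod.dist_eq]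
  simp only [padicKernelChange, dist_eq_norm]
  rw [norm_sub_inv_sub_sub_inv h2
      (hlt (padicSqrt_spec hp hn (mul_mem_closedBall_one hρ hu hu')).1)
      (hlt (padicSqrt_spec hp hn (mul_mem_closedBall_one hρ hv hv')).1),
    norm_padicSqrt_sub_padicSqrt hp hn (mul_mem_closedBall_one hρ hu hu₀)
      (mul_mem_closedBall_one hρ hv hv₀),
    norm_padicSqrt_sub_padicSqrt hp hn (mul_mem_closedBall_one hρ hu hu')
      (mul_mem_closedBall_one hρ hv hv'),
    max_norm_mul_sub_mul_inv_eq h2 (hlt hu₀) (hlt hu) (hlt hv₀) (hlt hv)]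

lemma bijOn_padicKernelChange :
    BijOn (padicKernelChange p n) (closedBall 1 ρ ×ˢ closedBall 1 ρ)
      (closedBall 1 ρ ×ˢ closedBall 0 ρ) :=
  ⟨mapsTo_padicKernelChange hp hn, fun x hx y hy h => dist_eq_zero.1 <|
    (dist_padicKernelChange hp hn x hx y hy).symm.trans (by rw [h, dist_self]),
    surjOn_padicKernelChange hp hn⟩

lemma measurePreserving_padicKernelChange [MeasurableSpace ℚ_[p]] [BorelSpace ℚ_[p]]
    (μ : Measure ℚ_[p]) [μ.IsAddHaarMeasure] :
    MeasurePreserving (padicKernelChange p n)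
      ((μ.prod μ).restrict (closedBall 1 ρ ×ˢ closedBall 1 ρ))
      ((μ.prod μ).restrict (closedBall 1 ρ ×ˢ closedBall 0 ρ)) := by
  have hmaps := mapsTo_padicKernelChange hp hn
  have hsurj := surjOn_padicKernelChange hp hn
  have hdist := dist_padicKernelChange hp hn
  simp only [closedBall_prod_same] at hmaps hsurj hdist ⊢
  have hmeas : Measurable (padicKernelChange p n) :=
    have h := measurable_padicSqrt (p := p) hp hn
    (h.comp (measurable_snd.mul measurable_fst)).prodMk
      ((h.comp (measurable_snd.mul measurable_fst.inv)).sub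
        (h.comp (measurable_snd.mul measurable_fst.inv)).inv)
  refine IsUltrametricDist.measurePreserving_restrict_closedBall (fun x y r => ?_) hmeas hmaps
    hsurj hdist
  rw [Measure.addHaar_closedBall_center, Measure.addHaar_closedBall_center (μ.prod μ) y]

end KernelChange

theorem padic_kernel_change_of_variables_general (p : ℕ) [Fact p.Prime] (hp : p ≠ 2)
    (n : ℕ) (hn : 1 ≤ n)
    [MeasurableSpace ℚ_[p]] [BorelSpace ℚ_[p]]
    (μ : Measure ℚ_[p]) [μ.IsAddHaarMeasure] :
    Set.BijOn
        (fun x : ℚ_[p] × ℚ_[p] =>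
          (padicSqrt p n (x.2 * x.1),
            padicSqrt p n (x.2 * x.1⁻¹) - (padicSqrt p n (x.2 * x.1⁻¹))⁻¹))
        ({u : ℚ_[p] | ‖u - 1‖ ≤ (p : ℝ) ^ (-(n : ℤ))} ×ˢ
          {u : ℚ_[p] | ‖u - 1‖ ≤ (p : ℝ) ^ (-(n : ℤ))})
        ({u : ℚ_[p] | ‖u - 1‖ ≤ (p : ℝ) ^ (-(n : ℤ))} ×ˢ
          {x : ℚ_[p] | ‖x‖ ≤ (p : ℝ) ^ (-(n : ℤ))}) ∧
    MeasurePreserving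
        (fun x : ℚ_[p] × ℚ_[p] =>
          (padicSqrt p n (x.2 * x.1),
            padicSqrt p n (x.2 * x.1⁻¹) - (padicSqrt p n (x.2 * x.1⁻¹))⁻¹))
        ((μ.prod μ).restrict
          ({u : ℚ_[p] | ‖u - 1‖ ≤ (p : ℝ) ^ (-(n : ℤ))} ×ˢ
            {u : ℚ_[p] | ‖u - 1‖ ≤ (p : ℝ) ^ (-(n : ℤ))}))
        ((μ.prod μ).restrict
          ({u : ℚ_[p] | ‖u - 1‖ ≤ (p : ℝ) ^ (-(n : ℤ))} ×ˢ
            {x : ℚ_[p] | ‖x‖ ≤ (p : ℝ) ^ (-(n : ℤ))})) := by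
  rw [show {x : ℚ_[p] | ‖x‖ ≤ (p : ℝ) ^ (-(n : ℤ))} = closedBall 0 ((p : ℝ) ^ (-(n : ℤ))) by
    ext; simp]
  exact ⟨bijOn_padicKernelChange hp hn, measurePreserving_padicKernelChange hp hn μ⟩

theorem padic_kernel_change_of_variables (p : ℕ) [Fact p.Prime] (hp : p ≠ 2)
    (n : ℕ) (hn : 1 ≤ n)
    [MeasurableSpace ℚ_[p]] [BorelSpace ℚ_[p]]
    (μ : Measure ℚ_[p]) [μ.IsAddHaarMeasure] [SigmaFinite μ] :
    Set.BijOn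
        (fun x : ℚ_[p] × ℚ_[p] =>
          (padicSqrt p n (x.2 * x.1),
            padicSqrt p n (x.2 * x.1⁻¹) - (padicSqrt p n (x.2 * x.1⁻¹))⁻¹))
        ({u : ℚ_[p] | ‖u - 1‖ ≤ (p : ℝ) ^ (-(n : ℤ))} ×ˢ
          {u : ℚ_[p] | ‖u - 1‖ ≤ (p : ℝ) ^ (-(n : ℤ))})
        ({u : ℚ_[p] | ‖u - 1‖ ≤ (p : ℝ) ^ (-(n : ℤ))} ×ˢ
          {x : ℚ_[p] | ‖x‖ ≤ (p : ℝ) ^ (-(n : ℤ))}) ∧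
    MeasurePreserving
        (fun x : ℚ_[p] × ℚ_[p] =>
          (padicSqrt p n (x.2 * x.1),
            padicSqrt p n (x.2 * x.1⁻¹) - (padicSqrt p n (x.2 * x.1⁻¹))⁻¹))
        ((μ.prod μ).restrict
          ({u : ℚ_[p] | ‖u - 1‖ ≤ (p : ℝ) ^ (-(n : ℤ))} ×ˢ
            {u : ℚ_[p] | ‖u - 1‖ ≤ (p : ℝ) ^ (-(n : ℤ))}))
        ((μ.prod μ).restrict
          ({u : ℚ_[p] | ‖u - 1‖ ≤ (p : ℝ) ^ (-(n : ℤ))} ×ˢ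
            {x : ℚ_[p] | ‖x‖ ≤ (p : ℝ) ^ (-(n : ℤ))})) :=
  padic_kernel_change_of_variables_general p hp n hn μ
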